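/- The matrix ĝ_{i j̄} = Φ_{i j̄}/Φ is positive definite at every point of ℂ² ∖ {0}, since it is a 2×2 Hermitian matrix with positive determinant 1/(Φ²Z³) and positive trace. -/

import Mathlib

/-!
Write `aᵢ = Φ^(−2kᵢ)`, `p = |z₁|²a₁`, `q = |z₂|²a₂` (so `p + q = 1`) and `T = k₁²p + k₂²q`.
The formula for `Φ_{i j̄}` is Hermitian, and dividing by `Φ` gives
`ĝ₁₁ = a₁ (Z + (1 − 4k₁ + 4T/Z) p) / Z²`, `ĝ₂₂` symmetrically, `ĝ₁₂ = (4T/Z − 1) a₁a₂ z̄₁z₂ / Z²`.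
Since `k₁ + k₂ = 1` and `p + q = 1`, `Z (Z + (1 − 4k₁ + 4T/Z) p) = 4k₂²q + pZ > 0`, so the trace
is positive, and the determinant collapses to `a₁a₂/Z³ = 1/(Φ²Z³) > 0`.
-/

open scoped ComplexOrder

/-- `Φᵢ = z̄ᵢ Φ^(1−2kᵢ)/Z`. -/
noncomputable def phiD (k1 k2 Φv Zv : ℝ) (z : ℂ × ℂ) (i : Fin 2) : ℂ :=
  (starRingEnd ℂ) (if i = 0 then z.1 else z.2)
    * ((Φv ^ (1 - 2 * (if i = 0 then k1 else k2)) : ℝ) : ℂ) / ((Zv : ℝ) : ℂ)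

/-- The explicit formula for the mixed Wirtinger second derivatives `Φ_{i j̄}`. -/
noncomputable def hessEntry (k1 k2 Φv Zv : ℝ) (z : ℂ × ℂ) (i j : Fin 2) : ℂ :=
  (if i = j then ((Φv ^ (1 - 2 * (if i = 0 then k1 else k2)) / Zv : ℝ) : ℂ) else 0)
    + (((1 - 2 * (if i = 0 then k1 else k2) - 2 * (if j = 0 then k1 else k2)
        + 4 / Zv * (k1 ^ 2 * ‖z.1‖ ^ 2 * Φv ^ (-(2 * k1))
            + k2 ^ 2 * ‖z.2‖ ^ 2 * Φv ^ (-(2 * k2)))) : ℝ) : ℂ)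
      * phiD k1 k2 Φv Zv z i * (starRingEnd ℂ) (phiD k1 k2 Φv Zv z j) / ((Φv : ℝ) : ℂ)

open Matrix

theorem Matrix.IsHermitian.posDef_of_trace_pos_of_det_pos {𝕜 : Type*} [RCLike 𝕜]
    {A : Matrix (Fin 2) (Fin 2) 𝕜} (hA : A.IsHermitian) (htr : 0 < A.trace)
    (hdet : 0 < A.det) : A.PosDef := by
  rw [hA.trace_eq_sum_eigenvalues, Fin.sum_univ_two, ← RCLike.ofReal_add,
    RCLike.ofReal_pos] at htr
  rw [hA.det_eq_prod_eigenvalues, Fin.prod_univ_two, ← RCLike.ofReal_mul,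
    RCLike.ofReal_pos] at hdet
  rw [hA.posDef_iff_eigenvalues_pos, Fin.forall_fin_two]
  exact (pos_and_pos_or_neg_and_neg_of_mul_pos hdet).resolve_right fun h => by linarith [h.1, h.2]

theorem Real.rpow_one_sub_two_mul {x : ℝ} (hx : 0 < x) (k : ℝ) :
    x ^ (1 - 2 * k) = x * x ^ (-(2 * k)) := by
  rw [sub_eq_add_neg, Real.rpow_add hx, Real.rpow_one]

section WeightedSums

variable {k1 k2 p q Z T : ℝ}

theorem weighted_sum_pos (hk1 : 0 < k1) (hk2 : 0 < k2) (hp : 0 ≤ p) (hq : 0 ≤ q)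
    (hpq : p + q = 1) : 0 < k1 * p + k2 * q := by
  calc 0 < min k1 k2 := lt_min hk1 hk2
    _ = min k1 k2 * p + min k1 k2 * q := by rw [← mul_add, hpq, mul_one]
    _ ≤ k1 * p + k2 * q := by gcongr <;> simp

theorem weighted_diag_pos (hk1 : 0 < k1) (hk2 : 0 < k2) (hsum : k1 + k2 = 1) (hp : 0 ≤ p)
    (hq : 0 ≤ q) (hpq : p + q = 1) (hZ : Z = 2 * (k1 * p + k2 * q))
    (hT : T = k1 ^ 2 * p + k2 ^ 2 * q) : 0 < Z + (1 - 4 * k1 + 4 / Z * T) * p := by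
  have hZpos : 0 < Z := by rw [hZ]; linarith [weighted_sum_pos hk1 hk2 hp hq hpq]
  have key : Z + (1 - 4 * k1 + 4 / Z * T) * p = (4 * k2 ^ 2 * q + Z * p) / Z := by
    field_simp
    subst hZ hT
    rw [show k2 = 1 - k1 by linarith, show q = 1 - p by linarith]
    ring
  have hnum : 0 < 4 * k2 ^ 2 * q + Z * p := by
    rcases hp.eq_or_lt with rfl | hp
    · rw [zero_add] at hpq
      simpa [hpq] using pow_pos hk2 2
    · exact add_pos_of_nonneg_of_pos (by positivity) (mul_pos hZpos hp)
  rw [key]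
  exact div_pos hnum hZpos

theorem weighted_det_eq (hsum : k1 + k2 = 1) (hpq : p + q = 1) (hZ0 : Z ≠ 0)
    (hZ : Z = 2 * (k1 * p + k2 * q)) (hT : T = k1 ^ 2 * p + k2 ^ 2 * q) :
    (Z + (1 - 4 * k1 + 4 / Z * T) * p) * (Z + (1 - 4 * k2 + 4 / Z * T) * q)
      - (1 - 2 * k1 - 2 * k2 + 4 / Z * T) ^ 2 * (p * q) = Z := by
  field_simp
  subst hZ hT
  rw [show k2 = 1 - k1 by linarith, show q = 1 - p by linarith]
  ring

end WeightedSums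

noncomputable def secondMoment (k1 k2 Φv : ℝ) (z : ℂ × ℂ) : ℝ :=
  k1 ^ 2 * ‖z.1‖ ^ 2 * Φv ^ (-(2 * k1)) + k2 ^ 2 * ‖z.2‖ ^ 2 * Φv ^ (-(2 * k2))

noncomputable def metricMatrix (k1 k2 Φv Zv : ℝ) (z : ℂ × ℂ) : Matrix (Fin 2) (Fin 2) ℂ :=
  Matrix.of fun i j => hessEntry k1 k2 Φv Zv z i j / ((Φv : ℝ) : ℂ)

section MetricMatrix

variable {k1 k2 Φv Zv : ℝ} {z : ℂ × ℂ}

theorem hessEntry_conj (i j : Fin 2) :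
    starRingEnd ℂ (hessEntry k1 k2 Φv Zv z i j) = hessEntry k1 k2 Φv Zv z j i := by
  simp only [hessEntry, map_add, map_mul, map_div₀, Complex.conj_ofReal, Complex.conj_conj]
  congr 1
  · rcases eq_or_ne i j with rfl | h
    · simp only [if_pos, Complex.conj_ofReal]
    · simp only [h, h.symm, if_false, map_zero]
  · rw [sub_right_comm (1 : ℝ)]
    ring

theorem metricMatrix_isHermitian : (metricMatrix k1 k2 Φv Zv z).IsHermitian :=
  IsHermitian.ext fun i j => by
    simp [metricMatrix, hessEntry_conj]

theorem metricMatrix_zero_zero (hΦ : 0 < Φv) :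
    metricMatrix k1 k2 Φv Zv z 0 0 = ((Φv ^ (-(2 * k1)) / Zv ^ 2
      * (Zv + (1 - 4 * k1 + 4 / Zv * secondMoment k1 k2 Φv z) * (‖z.1‖ ^ 2 * Φv ^ (-(2 * k1))))
        : ℝ) : ℂ) := by
  have hΦc : (Φv : ℂ) ≠ 0 := by exact_mod_cast hΦ.ne'
  simp only [metricMatrix, of_apply, hessEntry, phiD, secondMoment, Real.rpow_one_sub_two_mul hΦ,
    map_div₀, map_mul, Complex.conj_conj, Complex.conj_ofReal]
  push_cast
  rw [← Complex.conj_mul' z.1]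
  field_simp
  ring

theorem metricMatrix_one_one (hΦ : 0 < Φv) :
    metricMatrix k1 k2 Φv Zv z 1 1 = ((Φv ^ (-(2 * k2)) / Zv ^ 2
      * (Zv + (1 - 4 * k2 + 4 / Zv * secondMoment k1 k2 Φv z) * (‖z.2‖ ^ 2 * Φv ^ (-(2 * k2))))
        : ℝ) : ℂ) := by
  have hΦc : (Φv : ℂ) ≠ 0 := by exact_mod_cast hΦ.ne'
  simp only [metricMatrix, of_apply, hessEntry, phiD, secondMoment, Real.rpow_one_sub_two_mul hΦ,
    map_div₀, map_mul, Complex.conj_conj, Complex.conj_ofReal]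
  push_cast
  rw [← Complex.conj_mul' z.2]
  field_simp
  ring

theorem metricMatrix_zero_one (hΦ : 0 < Φv) :
    metricMatrix k1 k2 Φv Zv z 0 1 = (((1 - 2 * k1 - 2 * k2 + 4 / Zv * secondMoment k1 k2 Φv z)
      * Φv ^ (-(2 * k1)) * Φv ^ (-(2 * k2)) / Zv ^ 2 : ℝ) : ℂ) * (starRingEnd ℂ z.1 * z.2) := by
  have hΦc : (Φv : ℂ) ≠ 0 := by exact_mod_cast hΦ.ne'
  simp only [metricMatrix, of_apply, hessEntry, phiD, secondMoment, Real.rpow_one_sub_two_mul hΦ,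
    map_div₀, map_mul, Complex.conj_conj, Complex.conj_ofReal, if_neg (zero_ne_one' (Fin 2)),
    zero_add]
  push_cast
  field_simp

theorem pos_of_eq_two_mul_weighted_sum (hk1 : 0 < k1) (hk2 : 0 < k2) (hΦ : 0 < Φv)
    (heq : ‖z.1‖ ^ 2 * Φv ^ (-(2 * k1)) + ‖z.2‖ ^ 2 * Φv ^ (-(2 * k2)) = 1)
    (hZ : Zv = 2 * (k1 * ‖z.1‖ ^ 2 * Φv ^ (-(2 * k1)) + k2 * ‖z.2‖ ^ 2 * Φv ^ (-(2 * k2)))) :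
    0 < Zv := by
  have := weighted_sum_pos hk1 hk2 (by positivity) (by positivity) heq
  linarith

theorem metricMatrix_trace_pos (hk1 : 0 < k1) (hk2 : 0 < k2) (hsum : k1 + k2 = 1) (hΦ : 0 < Φv)
    (heq : ‖z.1‖ ^ 2 * Φv ^ (-(2 * k1)) + ‖z.2‖ ^ 2 * Φv ^ (-(2 * k2)) = 1)
    (hZ : Zv = 2 * (k1 * ‖z.1‖ ^ 2 * Φv ^ (-(2 * k1)) + k2 * ‖z.2‖ ^ 2 * Φv ^ (-(2 * k2)))) :
    0 < (metricMatrix k1 k2 Φv Zv z).trace := by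
  set a1 := Φv ^ (-(2 * k1))
  set a2 := Φv ^ (-(2 * k2))
  have hZ' : Zv = 2 * (k1 * (‖z.1‖ ^ 2 * a1) + k2 * (‖z.2‖ ^ 2 * a2)) := by rw [hZ]; ring
  have hT : secondMoment k1 k2 Φv z = k1 ^ 2 * (‖z.1‖ ^ 2 * a1) + k2 ^ 2 * (‖z.2‖ ^ 2 * a2) := by
    unfold secondMoment; ring
  have ha1 : 0 < a1 := Real.rpow_pos_of_pos hΦ _
  have ha2 : 0 < a2 := Real.rpow_pos_of_pos hΦ _
  have hZ0 := (pos_of_eq_two_mul_weighted_sum hk1 hk2 hΦ heq hZ).ne'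
  have h1 := weighted_diag_pos hk1 hk2 hsum (by positivity) (by positivity) heq hZ' hT
  have h2 := weighted_diag_pos (p := ‖z.2‖ ^ 2 * a2) (q := ‖z.1‖ ^ 2 * a1) hk2 hk1
    (by linarith) (by positivity) (by positivity) (by linarith) (hZ'.trans (by ring))
    (hT.trans (by ring))
  rw [trace_fin_two, metricMatrix_zero_zero hΦ, metricMatrix_one_one hΦ, ← Complex.ofReal_add,
    Complex.zero_lt_real]
  exact add_pos (mul_pos (by positivity) h1) (mul_pos (by positivity) h2)

theorem metricMatrix_det (hk1 : 0 < k1) (hk2 : 0 < k2) (hsum : k1 + k2 = 1) (hΦ : 0 < Φv)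
    (heq : ‖z.1‖ ^ 2 * Φv ^ (-(2 * k1)) + ‖z.2‖ ^ 2 * Φv ^ (-(2 * k2)) = 1)
    (hZ : Zv = 2 * (k1 * ‖z.1‖ ^ 2 * Φv ^ (-(2 * k1)) + k2 * ‖z.2‖ ^ 2 * Φv ^ (-(2 * k2)))) :
    (metricMatrix k1 k2 Φv Zv z).det = (((Φv ^ 2 * Zv ^ 3)⁻¹ : ℝ) : ℂ) := by
  rw [det_fin_two, ← metricMatrix_isHermitian.apply 1 0, metricMatrix_zero_zero hΦ,
    metricMatrix_one_one hΦ, metricMatrix_zero_one hΦ, Complex.star_def, Complex.mul_conj,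
    Complex.normSq_mul, Complex.normSq_mul, Complex.normSq_ofReal, Complex.normSq_conj,
    Complex.normSq_eq_norm_sq, Complex.normSq_eq_norm_sq, ← Complex.ofReal_mul,
    ← Complex.ofReal_sub, Complex.ofReal_inj]
  have ha : Φv ^ (-(2 * k1)) * Φv ^ (-(2 * k2)) = (Φv ^ 2)⁻¹ := by
    rw [← Real.rpow_add hΦ, show -(2 * k1) + -(2 * k2) = -2 by linear_combination -2 * hsum,
      Real.rpow_neg hΦ.le, Real.rpow_two]
  set a1 := Φv ^ (-(2 * k1))
  set a2 := Φv ^ (-(2 * k2))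
  have hZ' : Zv = 2 * (k1 * (‖z.1‖ ^ 2 * a1) + k2 * (‖z.2‖ ^ 2 * a2)) := by rw [hZ]; ring
  have hT : secondMoment k1 k2 Φv z = k1 ^ 2 * (‖z.1‖ ^ 2 * a1) + k2 ^ 2 * (‖z.2‖ ^ 2 * a2) := by
    unfold secondMoment; ring
  have hdet := weighted_det_eq hsum heq (pos_of_eq_two_mul_weighted_sum hk1 hk2 hΦ heq hZ).ne'
    hZ' hT
  set T := secondMoment k1 k2 Φv z
  calc _ = a1 * a2 / Zv ^ 4 * ((Zv + (1 - 4 * k1 + 4 / Zv * T) * (‖z.1‖ ^ 2 * a1))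
        * (Zv + (1 - 4 * k2 + 4 / Zv * T) * (‖z.2‖ ^ 2 * a2))
        - (1 - 2 * k1 - 2 * k2 + 4 / Zv * T) ^ 2 * ((‖z.1‖ ^ 2 * a1) * (‖z.2‖ ^ 2 * a2))) := by
        ring
    _ = (Φv ^ 2 * Zv ^ 3)⁻¹ := by
        rw [hdet, ha]
        field_simp

end MetricMatrix

theorem stmt_8_general (k1 k2 : ℝ) (hk1 : 0 < k1) (hk12 : k1 ≤ k2) (hsum : k1 + k2 = 1)
    (z : ℂ × ℂ) (Φv : ℝ) (hΦ : 0 < Φv)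
    (heq : ‖z.1‖ ^ 2 * Φv ^ (-(2 * k1)) + ‖z.2‖ ^ 2 * Φv ^ (-(2 * k2)) = 1)
    (Zv : ℝ)
    (hZ : Zv = 2 * (k1 * ‖z.1‖ ^ 2 * Φv ^ (-(2 * k1))
        + k2 * ‖z.2‖ ^ 2 * Φv ^ (-(2 * k2)))) :
    (Matrix.of fun i j : Fin 2 => hessEntry k1 k2 Φv Zv z i j / ((Φv : ℝ) : ℂ)).PosDef := by
  have hk2 : 0 < k2 := hk1.trans_le hk12
  refine metricMatrix_isHermitian.posDef_of_trace_pos_of_det_pos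
    (metricMatrix_trace_pos hk1 hk2 hsum hΦ heq hZ) ?_
  have hZpos := pos_of_eq_two_mul_weighted_sum hk1 hk2 hΦ heq hZ
  rw [metricMatrix_det hk1 hk2 hsum hΦ heq hZ, Complex.zero_lt_real]
  positivity

/-- The 2×2 Hermitian matrix `ĝ_{i j̄} = Φ_{i j̄}/Φ` is positive definite at every point
of `ℂ² ∖ {0}`. -/
theorem stmt_8 (k1 k2 : ℝ) (hk1 : 0 < k1) (hk12 : k1 ≤ k2) (hsum : k1 + k2 = 1)
    (z : ℂ × ℂ) (hz : z ≠ 0) (Φv : ℝ) (hΦ : 0 < Φv)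
    (heq : ‖z.1‖ ^ 2 * Φv ^ (-(2 * k1)) + ‖z.2‖ ^ 2 * Φv ^ (-(2 * k2)) = 1)
    (Zv : ℝ)
    (hZ : Zv = 2 * (k1 * ‖z.1‖ ^ 2 * Φv ^ (-(2 * k1))
        + k2 * ‖z.2‖ ^ 2 * Φv ^ (-(2 * k2)))) :
    (Matrix.of fun i j : Fin 2 => hessEntry k1 k2 Φv Zv z i j / ((Φv : ℝ) : ℂ)).PosDef :=
  stmt_8_general k1 k2 hk1 hk12 hsum z Φv hΦ heq Zv hZ
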